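/- arXiv:1401.6754 — 4 statements merged into one kernel-verified Lean document; each statement's English description precedes it below -/
import Mathlib

section
/- Suppose the moments c_n satisfy (λ_n − λ_m) c_{n+m} + (μ_n − μ_m) c_{n+m-1} = 0 for all m ≠ n, with λ_n pairwise distinct. If μ_j = μ_k for some j > k ≥ 0, then c_n = 0 for all n ≥ j + k. -/
/-!
At `(m, n) = (k, j)` the `μ`-term of the relation vanishes, so `c (j + k) = 0`. The relation at
`m = 0` reads `(λ (n+1) - λ 0) c (n+1) = -(μ (n+1) - μ 0) c n`, which propagates vanishing upward.
-/

def MomentRecurrence {R : Type*} [Ring R] (lam mu c : ℕ → R) : Prop :=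
  ∀ m n : ℕ, m ≠ n → (lam n - lam m) * c (n + m) + (mu n - mu m) * c (n + m - 1) = 0

namespace MomentRecurrence

variable {R : Type*} [Ring R] [NoZeroDivisors R] {lam mu c : ℕ → R}

theorem moment_add_eq_zero (h : MomentRecurrence lam mu c) (hlam : Function.Injective lam)
    {m n : ℕ} (hmn : m ≠ n) (hmu : mu n = mu m) : c (n + m) = 0 := by
  have hrel := h m n hmn
  rw [hmu, sub_self, zero_mul, add_zero] at hrel
  exact (mul_eq_zero.mp hrel).resolve_left (sub_ne_zero.mpr (hlam.ne hmn.symm))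

theorem moment_succ_eq_zero (h : MomentRecurrence lam mu c) (hlam : Function.Injective lam)
    {n : ℕ} (hn : c n = 0) : c (n + 1) = 0 := by
  have hrel := h 0 (n + 1) (Nat.succ_ne_zero n).symm
  rw [Nat.add_zero, Nat.add_sub_cancel, hn, mul_zero, add_zero] at hrel
  exact (mul_eq_zero.mp hrel).resolve_left (sub_ne_zero.mpr (hlam.ne (Nat.succ_ne_zero n)))

theorem moment_eq_zero_of_le (h : MomentRecurrence lam mu c) (hlam : Function.Injective lam)
    {n₀ : ℕ} (hn₀ : c n₀ = 0) {n : ℕ} (hn : n₀ ≤ n) : c n = 0 := by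
  induction n, hn using Nat.le_induction with
  | base => exact hn₀
  | succ n _ ih => exact h.moment_succ_eq_zero hlam ih

end MomentRecurrence

theorem stmt_8_general (lam mu c : ℕ → ℝ) (hlam : Function.Injective lam)
    (hrel : ∀ m n : ℕ, m ≠ n →
      (lam n - lam m) * c (n + m) + (mu n - mu m) * c (n + m - 1) = 0)
    (j k : ℕ) (hjk : k < j) (hmu : mu j = mu k) :
    ∀ n : ℕ, j + k ≤ n → c n = 0 := by
  have h : MomentRecurrence lam mu c := hrel
  intro n hn
  exact h.moment_eq_zero_of_le hlam (h.moment_add_eq_zero hlam hjk.ne hmu) hn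

theorem stmt_8 (lam mu c : ℕ → ℝ) (hlam : Function.Injective lam)
    (hlam0 : lam 0 = 0) (hmu0 : mu 0 = 0) (hc0 : c 0 = 1)
    (hrel : ∀ m n : ℕ, m ≠ n →
      (lam n - lam m) * c (n + m) + (mu n - mu m) * c (n + m - 1) = 0)
    (j k : ℕ) (hjk : k < j) (hmu : mu j = mu k) :
    ∀ n : ℕ, j + k ≤ n → c n = 0 :=
  stmt_8_general lam mu c hlam hrel j k hjk hmu
end

section
/- Suppose (λ_n − λ_m) c_{n+m} + (μ_n − μ_m) c_{n+m-1} = 0 for all m ≠ n, with λ_n pairwise distinct and μ_n pairwise distinct. If c_j = 0 for some j > 0, then c_n = 0 for all n ≥ j. -/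
theorem stmt_9_general (lam mu c : ℕ → ℝ) (hlam : Function.Injective lam)
    (hlam0 : lam 0 = 0) (hmu0 : mu 0 = 0)
    (hrel : ∀ m n : ℕ, m ≠ n →
      (lam n - lam m) * c (n + m) + (mu n - mu m) * c (n + m - 1) = 0)
    (j : ℕ) (hcj : c j = 0) :
    ∀ n : ℕ, j ≤ n → c n = 0 := by
  intro n hn
  induction n, hn using Nat.le_induction with
  | base => exact hcj
  | succ n _ ih =>
    have hrel0 : lam (n + 1) * c (n + 1) + mu (n + 1) * c n = 0 := by
      simpa [hlam0, hmu0] using hrel 0 (n + 1) n.succ_ne_zero.symm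
    have hlam_ne : lam (n + 1) ≠ 0 := hlam0 ▸ hlam.ne n.succ_ne_zero
    rw [ih, mul_zero, add_zero] at hrel0
    exact (mul_eq_zero.mp hrel0).resolve_left hlam_ne

theorem stmt_9 (lam mu c : ℕ → ℝ) (hlam : Function.Injective lam)
    (hmu : Function.Injective mu) (hlam0 : lam 0 = 0) (hmu0 : mu 0 = 0)
    (hc0 : c 0 = 1)
    (hrel : ∀ m n : ℕ, m ≠ n →
      (lam n - lam m) * c (n + m) + (mu n - mu m) * c (n + m - 1) = 0)
    (j : ℕ) (hj : 0 < j) (hcj : c j = 0) :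
    ∀ n : ℕ, j ≤ n → c n = 0 :=
  stmt_9_general lam mu c hlam hlam0 hmu0 hrel j hcj
end

section
/- Let L x^n = λ_n x^n + μ_n x^{n-1} with λ_n satisfying λ_{n+2} + λ_n − Ω λ_{n+1} + B₂ = 0 and μ_n satisfying μ_{n+2} + μ_n − Ω μ_{n+1} + C₂ = 0 for all n ≥ 0. Then the operator identity X² L + L X² − Ω X L X + B₂ X² + C₂ X = 0 holds on all polynomials, where X is multiplication by x. Conversely, the operator identity implies both recurrences. -/
/-!
The operator identity is linear in `p`, so it suffices to test it on the monomials `X ^ n`.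
Since `L` lowers degrees by at most one, the left-hand side sends `X ^ n` to a combination of
`X ^ (n + 2)` and `X ^ (n + 1)` whose two coefficients are exactly the left-hand sides of the
recurrences for `λ` and `μ` at `n`.
-/

open Polynomial

namespace Polynomial

variable {R : Type*}

theorem forall_apply_eq_zero_iff_forall_X_pow [CommSemiring R] {M : Type*} [AddCommMonoid M]
    [Module R M] (f : R[X] →ₗ[R] M) : (∀ p, f p = 0) ↔ ∀ n, f (X ^ n) = 0 := by
  refine ⟨fun h n => h _, fun h p => ?_⟩
  have hf : f = 0 := (basisMonomials R).ext fun n => by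
    simpa [coe_basisMonomials, monomial_one_right_eq_X_pow] using h n
  rw [hf, LinearMap.zero_apply]

theorem smul_X_pow_add_smul_X_pow_eq_zero_iff [Semiring R] {m k : ℕ} (hmk : m ≠ k) (a b : R) :
    a • X ^ m + b • X ^ k = (0 : R[X]) ↔ a = 0 ∧ b = 0 := by
  refine ⟨fun h => ⟨?_, ?_⟩, fun ⟨ha, hb⟩ => by simp [ha, hb]⟩
  · simpa [coeff_X_pow, hmk] using congrArg (coeff · m) h
  · simpa [coeff_X_pow, hmk.symm] using congrArg (coeff · k) h

variable [CommRing R]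

noncomputable def recurrenceOperator (L : R[X] →ₗ[R] R[X]) (Ω B₂ C₂ : R) : R[X] →ₗ[R] R[X] :=
  let Xop := LinearMap.mulLeft R (X : R[X])
  Xop ∘ₗ Xop ∘ₗ L + L ∘ₗ Xop ∘ₗ Xop - Ω • (Xop ∘ₗ L ∘ₗ Xop) + B₂ • (Xop ∘ₗ Xop) + C₂ • Xop

section LowerBidiagonal

variable (L : R[X] →ₗ[R] R[X]) {lam mu : ℕ → R} (hmu0 : mu 0 = 0)
  (hL : ∀ n, L (X ^ n) = lam n • X ^ n + mu n • X ^ (n - 1))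
include hmu0 hL

theorem X_mul_apply_X_pow (n : ℕ) : X * L (X ^ n) = lam n • X ^ (n + 1) + mu n • X ^ n := by
  rw [hL, mul_add, mul_smul_comm, mul_smul_comm, ← pow_succ']
  rcases n with _ | n
  · simp [hmu0]
  · rw [Nat.add_sub_cancel, ← pow_succ']

theorem recurrenceOperator_apply_X_pow (Ω B₂ C₂ : R) (n : ℕ) :
    recurrenceOperator L Ω B₂ C₂ (X ^ n) =
      (lam (n + 2) + lam n - Ω * lam (n + 1) + B₂) • X ^ (n + 2) +
        (mu (n + 2) + mu n - Ω * mu (n + 1) + C₂) • X ^ (n + 1) := by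
  simp only [recurrenceOperator, LinearMap.add_apply, LinearMap.sub_apply, LinearMap.smul_apply,
    LinearMap.comp_apply, LinearMap.mulLeft_apply]
  rw [X_mul_apply_X_pow L hmu0 hL, ← pow_succ', X_mul_apply_X_pow L hmu0 hL, ← pow_succ', hL,
    Nat.add_sub_cancel, mul_add, mul_smul_comm, mul_smul_comm, ← pow_succ', ← pow_succ']
  module

end LowerBidiagonal

end Polynomial

theorem stmt_15 (L Xop : Polynomial ℝ →ₗ[ℝ] Polynomial ℝ)
    (lam mu : ℕ → ℝ) (hmu0 : mu 0 = 0)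
    (hL : ∀ n : ℕ, L (X ^ n) = lam n • X ^ n + mu n • X ^ (n - 1))
    (hX : ∀ p : Polynomial ℝ, Xop p = X * p) (Ω B₂ C₂ : ℝ) :
    (∀ p : Polynomial ℝ,
        Xop (Xop (L p)) + L (Xop (Xop p)) - Ω • Xop (L (Xop p)) +
          B₂ • Xop (Xop p) + C₂ • Xop p = 0) ↔
    ((∀ n : ℕ, lam (n + 2) + lam n - Ω * lam (n + 1) + B₂ = 0) ∧
     (∀ n : ℕ, mu (n + 2) + mu n - Ω * mu (n + 1) + C₂ = 0)) := by
  obtain rfl : Xop = LinearMap.mulLeft ℝ X := LinearMap.ext hX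
  change (∀ p, recurrenceOperator L Ω B₂ C₂ p = 0) ↔ _
  simp only [forall_apply_eq_zero_iff_forall_X_pow, recurrenceOperator_apply_X_pow L hmu0 hL,
    ← forall_and]
  exact forall_congr' fun n => smul_X_pow_add_smul_X_pow_eq_zero_iff (by omega) _ _
end

section
/- If monic orthogonal polynomials P_n satisfy P_{n+1}(x) + b_n P_n(x) + u_n P_{n-1}(x) = x P_n(x) and also L P_n = λ_n P_n where L x^n = λ_n x^n + μ_n x^{n-1} with λ_n pairwise distinct, then b_n = μ_n/(λ_n − λ_{n-1}) − μ_{n+1}/(λ_{n+1} − λ_n) for all n ≥ 1. -/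
/-!
Since `L` lowers the degree by at most one, comparing the coefficients of `x^(n-1)` in
`L P_n = λ_n P_n` gives the subleading coefficient of `P_n` as `μ_n / (λ_n - λ_{n-1})`.
Comparing the coefficients of `x^n` in the recurrence gives `b_n` as the difference of the
subleading coefficients of `P_n` and `P_{n+1}`.
-/

open Polynomial

section

variable {R : Type*} [CommRing R]

theorem coeff_apply_of_apply_X_pow (L : R[X] →ₗ[R] R[X]) {lam mu : ℕ → R} (hmu0 : mu 0 = 0)
    (hL : ∀ n : ℕ, L (X ^ n) = lam n • X ^ n + mu n • X ^ (n - 1)) (p : R[X]) (m : ℕ) :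
    (L p).coeff m = lam m * p.coeff m + mu (m + 1) * p.coeff (m + 1) := by
  induction p using Polynomial.induction_on' with
  | add p q hp hq => simp only [map_add, coeff_add, hp, hq]; ring
  | monomial k a =>
    rw [← C_mul_X_pow_eq_monomial, ← smul_eq_C_mul, map_smul, hL]
    simp only [coeff_smul, coeff_add, coeff_X_pow, smul_eq_mul]
    rcases Nat.lt_trichotomy m k with hmk | rfl | hkm
    · by_cases hk : m + 1 = k
      · subst hk; simp [mul_comm]
      · simp [hmk.ne, hk, show m ≠ k - 1 by omega]
    · -- for `k = 0` the term `mu 0 • X ^ (0 - 1)` is the constant `mu 0`, killed by `hmu0`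
      rcases Nat.eq_zero_or_pos m with rfl | hm
      · simp [hmu0, mul_comm]
      · simp [show m ≠ m - 1 by omega, mul_comm]
    · simp [hkm.ne', show m ≠ k - 1 by omega, show m + 1 ≠ k by omega]

theorem coeff_eq_sub_of_X_mul_eq {p q r : R[X]} {n : ℕ} {b u : R} (hp : p.Monic)
    (hpdeg : p.natDegree = n + 1) (hr : r.natDegree ≤ n)
    (h : X * p = q + C b * p + C u * r) :
    b = p.coeff n - q.coeff (n + 1) := by
  have := congrArg (coeff · (n + 1)) h
  simp only [coeff_X_mul, coeff_add, coeff_C_mul] at this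
  have hlead : p.coeff (n + 1) = 1 := hpdeg ▸ hp.coeff_natDegree
  rw [hlead, coeff_eq_zero_of_natDegree_lt (p := r) (by omega)] at this
  linear_combination -this

end

theorem subleading_coeff_of_eigen {K : Type*} [Field K] (L : K[X] →ₗ[K] K[X])
    {lam mu : ℕ → K} (hmu0 : mu 0 = 0)
    (hL : ∀ n : ℕ, L (X ^ n) = lam n • X ^ n + mu n • X ^ (n - 1))
    {p : K[X]} {n : ℕ} (hp : p.Monic) (hpdeg : p.natDegree = n + 1) (hlam : lam (n + 1) ≠ lam n)
    (heig : L p = lam (n + 1) • p) :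
    p.coeff n = mu (n + 1) / (lam (n + 1) - lam n) := by
  have := congrArg (coeff · n) heig
  simp only [coeff_apply_of_apply_X_pow L hmu0 hL, coeff_smul, smul_eq_mul] at this
  have hlead : p.coeff (n + 1) = 1 := hpdeg ▸ hp.coeff_natDegree
  rw [hlead] at this
  rw [eq_div_iff (sub_ne_zero.mpr hlam)]
  linear_combination -this

theorem stmt_16 (L : Polynomial ℝ →ₗ[ℝ] Polynomial ℝ) (lam mu : ℕ → ℝ)
    (hmu0 : mu 0 = 0) (hlam : Function.Injective lam)
    (hL : ∀ n : ℕ, L (X ^ n) = lam n • X ^ n + mu n • X ^ (n - 1))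
    (P : ℕ → Polynomial ℝ) (hmonic : ∀ n, (P n).Monic)
    (hdeg : ∀ n, (P n).natDegree = n) (heig : ∀ n, L (P n) = lam n • P n)
    (b u : ℕ → ℝ)
    (hrec : ∀ n : ℕ, 1 ≤ n →
      X * P n = P (n + 1) + C (b n) * P n + C (u n) * P (n - 1)) :
    ∀ n : ℕ, 1 ≤ n →
      b n = mu n / (lam n - lam (n - 1)) - mu (n + 1) / (lam (n + 1) - lam n) := by
  intro n hn
  obtain ⟨k, rfl⟩ : ∃ k, n = k + 1 := ⟨n - 1, by omega⟩
  have subleading (m : ℕ) : (P (m + 1)).coeff m = mu (m + 1) / (lam (m + 1) - lam m) :=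
    subleading_coeff_of_eigen L hmu0 hL (hmonic _) (hdeg _) (hlam.ne (by omega)) (heig _)
  rw [coeff_eq_sub_of_X_mul_eq (hmonic _) (hdeg _) (by rw [hdeg]; omega) (hrec _ hn),
    subleading, subleading, Nat.add_sub_cancel]
end
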